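/- arXiv:1911.08632 — 2 statements merged into one kernel-verified Lean document; each statement's English description precedes it below -/
import Mathlib

section
/- Interface composition is cancellative: if I1 ⊕ I2 and I1 ⊕ I3 are both defined and equal, then I2 = I3 (they have the same domain, inflow, and outflow). -/
/-- A flow interface: a domain, an inflow, and an outflow. -/
structure Intf (ι M : Type*) where
  dom : Finset ι
  inflow : ι → M
  outflow : ι → M

/-- I is the composition I1 ⊕ I2 of flow interfaces. -/
def IntComp {ι M : Type*} [AddCommMonoid M] [DecidableEq ι] (I1 I2 I : Intf ι M) : Prop :=
  Disjoint I1.dom I2.dom ∧ I.dom = I1.dom ∪ I2.dom ∧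
  (∀ n ∈ I1.dom, I1.inflow n = I.inflow n + I2.outflow n) ∧
  (∀ n ∈ I2.dom, I2.inflow n = I.inflow n + I1.outflow n) ∧
  (∀ n ∉ I.dom, I.outflow n = I1.outflow n + I2.outflow n)

namespace IntComp

variable {ι M : Type*} [AddCommMonoid M] [DecidableEq ι] {I1 I2 I3 I : Intf ι M}

theorem dom_right_eq_sdiff (h : IntComp I1 I2 I) : I2.dom = I.dom \ I1.dom := by
  rw [h.2.1, Finset.union_sdiff_left, Finset.sdiff_eq_self_of_disjoint h.1.symm]

theorem dom_right_unique (h12 : IntComp I1 I2 I) (h13 : IntComp I1 I3 I) : I2.dom = I3.dom := by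
  rw [h12.dom_right_eq_sdiff, h13.dom_right_eq_sdiff]

theorem inflow_right_unique (h12 : IntComp I1 I2 I) (h13 : IntComp I1 I3 I) {n : ι}
    (hn : n ∈ I2.dom) : I2.inflow n = I3.inflow n := by
  rw [h12.2.2.2.1 n hn, h13.2.2.2.1 n (h12.dom_right_unique h13 ▸ hn)]

theorem notMem_dom_of_notMem_left_of_notMem_right (h : IntComp I1 I2 I) {n : ι}
    (h1 : n ∉ I1.dom) (h2 : n ∉ I2.dom) : n ∉ I.dom := by
  simp [h.2.1, h1, h2]

variable [IsLeftCancelAdd M]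

theorem outflow_right_unique_of_mem_left (h12 : IntComp I1 I2 I) (h13 : IntComp I1 I3 I)
    {n : ι} (hn : n ∈ I1.dom) : I2.outflow n = I3.outflow n :=
  add_left_cancel ((h12.2.2.1 n hn).symm.trans (h13.2.2.1 n hn))

theorem outflow_right_unique_of_notMem (h12 : IntComp I1 I2 I) (h13 : IntComp I1 I3 I)
    {n : ι} (hn : n ∉ I.dom) : I2.outflow n = I3.outflow n :=
  add_left_cancel ((h12.2.2.2.2 n hn).symm.trans (h13.2.2.2.2 n hn))

end IntComp

/-- Interface composition is cancellative: if I1 ⊕ I2 and I1 ⊕ I3 are both defined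
and equal, then I2 = I3 (same domain, inflow, and outflow). -/
theorem stmt5 {ι M : Type*} [AddCommMonoid M] [DecidableEq ι]
    (hcanc : ∀ m1 m2 m3 : M, m1 + m2 = m1 + m3 → m2 = m3)
    (I1 I2 I3 I : Intf ι M)
    (h12 : IntComp I1 I2 I) (h13 : IntComp I1 I3 I) :
    I2.dom = I3.dom ∧ (∀ n ∈ I2.dom, I2.inflow n = I3.inflow n) ∧
    (∀ n ∉ I2.dom, I2.outflow n = I3.outflow n) := by
  have : IsLeftCancelAdd M := ⟨hcanc⟩
  refine ⟨h12.dom_right_unique h13, fun n hn => h12.inflow_right_unique h13 hn, fun n hn => ?_⟩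
  by_cases h1 : n ∈ I1.dom
  · exact h12.outflow_right_unique_of_mem_left h13 h1
  · exact h12.outflow_right_unique_of_notMem h13
      (h12.notMem_dom_of_notMem_left_of_notMem_right h1 hn)
end

section
/- Effectively acyclic flow graphs have unique flows: let M be a positive cancellative commutative monoid and E a closed set of endomorphisms of M. If flow : N → M satisfies FlowEqn(in, e, flow) and the flow graph (N, e, flow) is effectively acyclic — meaning for all k ≥ 1 and n1, …, nk ∈ N, applying the edge functions around the cycle n1 → n2 → ⋯ → nk → n1 to flow(n1) yields 0 — then flow is the unique solution of FlowEqn(in, e, ·) among effectively acyclic solutions. -/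
def FlowEqn {ι M : Type*} [AddCommMonoid M] (N : Finset ι)
    (e : ι → ι → M → M) (inf flo : ι → M) : Prop :=
  ∀ n ∈ N, flo n = inf n + ∑ n' ∈ N, e n' n (flo n')

def chainFn {ι M : Type*} (e : ι → ι → M → M) : ι → List ι → ι → M → M
  | n1, [], n => e n1 n
  | n1, n2 :: rest, n => fun m => chainFn e n2 rest n (e n1 n2 m)

def pathVal {ι M : Type*} [Zero M] (e : ι → ι → M → M) (f : ι → M) (n : ι) :
    List ι → M
  | [] => 0
  | n1 :: rest => chainFn e n1 rest n (f n1)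

/-- Effective acyclicity: for every k ≥ 1 and nodes n1, …, nk ∈ N, propagating
flow(n1) around the cycle n1 → n2 → ⋯ → nk → n1 yields 0. -/
def EffAcyclic {ι M : Type*} [AddCommMonoid M] (N : Finset ι)
    (e : ι → ι → M → M) (flo : ι → M) : Prop :=
  ∀ (k : ℕ) (p : Fin (k + 1) → ι), (∀ i, p i ∈ N) →
    pathVal e flo (p 0) (List.ofFn p) = 0

/-!
Unfolding the flow equation `k` times writes any solution as
`flo n = flowApprox k n + flowTail k n`, where the first summand depends only on the inflow
and the second is a sum of the values of `flo` propagated along the paths of length `k`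
ending in `n`. Once `k > #N`, every such path passes twice through some node `x`. The value
arriving at `x` is bounded by `flo x`, in the sense that adding something to it gives `flo x`;
propagating around the cycle back to `x` sends `flo x` to `0` by effective acyclicity, so by
positivity it also sends the smaller value to `0`. Hence the tail vanishes for every effectively
acyclic solution, and all of them equal `flowApprox (#N + 1)`.
-/

open Finset

section Chains

variable {ι M : Type*}

theorem chainFn_append (e : ι → ι → M → M) (l₁ : List ι) (n₁ x : ι) (l₂ : List ι) (n : ι)
    (m : M) : chainFn e n₁ (l₁ ++ x :: l₂) n m = chainFn e x l₂ n (chainFn e n₁ l₁ x m) := by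
  induction l₁ generalizing n₁ m with
  | nil => rfl
  | cons y t ih => exact ih y (e n₁ y m)

theorem pathVal_append_singleton [Zero M] (e : ι → ι → M → M) (f : ι → M) {l : List ι}
    (hl : l ≠ []) (x n : ι) : pathVal e f n (l ++ [x]) = e x n (pathVal e f x l) := by
  obtain ⟨y, t, rfl⟩ := List.exists_cons_of_ne_nil hl
  exact chainFn_append e t y x [] n (f y)

variable [AddCommMonoid M] (e : ι → ι → M →+ M)

theorem chainFn_add (n₁ : ι) (l : List ι) (n : ι) (x y : M) :
    chainFn (e · ·) n₁ l n (x + y) = chainFn (e · ·) n₁ l n x + chainFn (e · ·) n₁ l n y := by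
  induction l generalizing n₁ x y with
  | nil => exact map_add _ x y
  | cons m t ih => exact (congrArg _ (map_add _ x y)).trans (ih m _ _)

theorem chainFn_zero (n₁ : ι) (l : List ι) (n : ι) : chainFn (e · ·) n₁ l n 0 = 0 := by
  induction l generalizing n₁ with
  | nil => exact map_zero _
  | cons m t ih => exact (congrArg _ (map_zero _)).trans (ih m)

end Chains

theorem List.exists_eq_append_cons_append_cons_of_not_nodup {α : Type*} :
    ∀ {l : List α}, ¬l.Nodup → ∃ a x b c, l = a ++ x :: (b ++ x :: c)
  | [], h => absurd List.nodup_nil h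
  | y :: t, h => by
    by_cases hy : y ∈ t
    · obtain ⟨b, c, rfl⟩ := List.append_of_mem hy
      exact ⟨[], y, b, c, rfl⟩
    · obtain ⟨a, x, b, c, rfl⟩ :=
        exists_eq_append_cons_append_cons_of_not_nodup fun ht => h (List.nodup_cons.2 ⟨hy, ht⟩)
      exact ⟨y :: a, x, b, c, rfl⟩

section Unfolding

variable {ι M : Type*} [AddCommMonoid M] (N : Finset ι)

def flowApprox (e : ι → ι → M → M) (inf : ι → M) : ℕ → ι → M
  | 0, _ => 0
  | k + 1, n => inf n + ∑ n' ∈ N, e n' n (flowApprox e inf k n')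

def flowTail (e : ι → ι → M → M) (flo : ι → M) : ℕ → ι → M
  | 0, n => flo n
  | k + 1, n => ∑ n' ∈ N, e n' n (flowTail e flo k n')

variable {N} (e : ι → ι → M →+ M)

theorem FlowEqn.eq_flowApprox_add_flowTail {inf flo : ι → M} (hflow : FlowEqn N (e · ·) inf flo)
    (k : ℕ) : ∀ n ∈ N, flo n = flowApprox N (e · ·) inf k n + flowTail N (e · ·) flo k n := by
  induction k with
  | zero => intro n _; simp [flowApprox, flowTail]
  | succ k ih =>
    intro n hn
    rw [hflow n hn, flowApprox, flowTail, add_assoc, ← sum_add_distrib]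
    congr 1
    exact sum_congr rfl fun n' hn' => by rw [ih n' hn']; exact map_add _ _ _

/-- Stated for `φ (flowTail …)` rather than `flowTail …` so that the induction can absorb the
last edge of each path into `φ`. -/
theorem map_flowTail_eq_zero (flo : ι → M) (k : ℕ) :
    ∀ (n : ι) (φ : M →+ M),
      (∀ l : List ι, l.length = k + 1 → (∀ y ∈ l, y ∈ N) → φ (pathVal (e · ·) flo n l) = 0) →
      φ (flowTail N (e · ·) flo (k + 1) n) = 0 := by
  induction k with
  | zero =>
    intro n φ h
    rw [flowTail, map_sum]
    exact sum_eq_zero fun n' hn' => h [n'] rfl (by simpa using hn')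
  | succ k ih =>
    intro n φ h
    rw [flowTail, map_sum]
    refine sum_eq_zero fun n' hn' => ih n' (φ.comp (e n' n)) fun l hl hlN => ?_
    have hl₀ : l ≠ [] := List.ne_nil_of_length_eq_add_one hl
    rw [AddMonoidHom.comp_apply, ← pathVal_append_singleton (e · ·) flo hl₀]
    exact h _ (by simp [hl]) (by simpa [or_imp, forall_and, hn'] using hlN)

end Unfolding

section Acyclicity

variable {ι M : Type*} [AddCommMonoid M] {N : Finset ι}

theorem EffAcyclic.chainFn_cycle_eq_zero {e : ι → ι → M → M} {flo : ι → M}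
    (hea : EffAcyclic N e flo) {x : ι} (hx : x ∈ N) {l : List ι} (hl : ∀ y ∈ l, y ∈ N) :
    chainFn e x l x (flo x) = 0 := by
  have h := hea l.length (x :: l).get fun i => List.forall_mem_cons.2 ⟨hx, hl⟩ _ (List.get_mem _ _)
  rwa [List.ofFn_get] at h

theorem FlowEqn.exists_add_eq {e : ι → ι → M → M} {inf flo : ι → M}
    (hflow : FlowEqn N e inf flo) {n' n : ι} (hn' : n' ∈ N) (hn : n ∈ N) :
    ∃ d, e n' n (flo n') + d = flo n := by
  classical
  refine ⟨inf n + ∑ x ∈ N.erase n', e x n (flo x), ?_⟩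
  rw [add_left_comm, add_sum_erase N (fun x => e x n (flo x)) hn', hflow n hn]

variable (e : ι → ι → M →+ M)

theorem FlowEqn.exists_add_chainFn_eq {inf flo : ι → M} (hflow : FlowEqn N (e · ·) inf flo)
    (l : List ι) (hl : ∀ y ∈ l, y ∈ N) {n₁ n : ι} (hn₁ : n₁ ∈ N) (hn : n ∈ N) :
    ∃ d, chainFn (e · ·) n₁ l n (flo n₁) + d = flo n := by
  induction l generalizing n₁ with
  | nil => exact hflow.exists_add_eq hn₁ hn
  | cons n₂ t ih =>
    obtain ⟨hn₂, ht⟩ := List.forall_mem_cons.1 hl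
    obtain ⟨d₀, hd₀⟩ := hflow.exists_add_eq hn₁ hn₂
    obtain ⟨d₁, hd₁⟩ := ih ht hn₂
    refine ⟨chainFn (e · ·) n₂ t n d₀ + d₁, ?_⟩
    rw [← hd₁, ← hd₀, chainFn_add, add_assoc]
    rfl

theorem pathVal_eq_zero_of_card_lt_length (hpos : ∀ a b : M, a + b = 0 → a = 0)
    {inf flo : ι → M} (hflow : FlowEqn N (e · ·) inf flo) (hea : EffAcyclic N (e · ·) flo)
    {l : List ι} (hl : ∀ y ∈ l, y ∈ N) (hlen : #N < l.length) (n : ι) :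
    pathVal (e · ·) flo n l = 0 := by
  classical
  have hdup : ¬l.Nodup := fun hnd => by
    have := card_le_card fun y hy => hl y (List.mem_toFinset.1 hy)
    rw [List.toFinset_card_of_nodup hnd] at this
    omega
  obtain ⟨a, x, b, c, rfl⟩ := List.exists_eq_append_cons_append_cons_of_not_nodup hdup
  have hx : x ∈ N := hl x (by simp)
  have hb : ∀ y ∈ b, y ∈ N := fun y hy => hl y (by simp [hy])
  -- `v` is the value with which the path first arrives at `x`
  obtain ⟨v, d, hvd, hv⟩ : ∃ v d, v + d = flo x ∧
      pathVal (e · ·) flo n (a ++ x :: (b ++ x :: c)) =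
        chainFn (e · ·) x c n (chainFn (e · ·) x b x v) := by
    cases a with
    | nil => exact ⟨flo x, 0, add_zero _, chainFn_append _ b x x c n _⟩
    | cons a₁ a' =>
      obtain ⟨d, hd⟩ := hflow.exists_add_chainFn_eq e a' (fun y hy => hl y (by simp [hy]))
        (hl a₁ (by simp)) hx
      exact ⟨_, d, hd, by simp only [pathVal, List.cons_append, chainFn_append]⟩
  have hcycle : chainFn (e · ·) x b x v = 0 := hpos _ (chainFn (e · ·) x b x d) <| by
    rw [← chainFn_add, hvd]
    exact hea.chainFn_cycle_eq_zero hx hb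
  rw [hv, hcycle, chainFn_zero]

theorem FlowEqn.flowTail_eq_zero (hpos : ∀ a b : M, a + b = 0 → a = 0) {inf flo : ι → M}
    (hflow : FlowEqn N (e · ·) inf flo) (hea : EffAcyclic N (e · ·) flo) (n : ι) :
    flowTail N (e · ·) flo (#N + 1) n = 0 :=
  map_flowTail_eq_zero e flo #N n (AddMonoidHom.id M) fun _ hl hlN =>
    pathVal_eq_zero_of_card_lt_length e hpos hflow hea hlN (by omega) n

end Acyclicity

theorem stmt11_general {ι M : Type*} [AddCommMonoid M]
    (hpos : ∀ a b : M, a + b = 0 → a = 0 ∧ b = 0)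
    (hcanc : ∀ a b c : M, a + b = a + c → b = c)
    (E : Set (M → M))
    (hEendo : ∀ f ∈ E, ∀ a b : M, f (a + b) = f a + f b)
    (N : Finset ι) (e : ι → ι → M → M) (hE : ∀ a b, e a b ∈ E)
    (inf flo : ι → M)
    (hflow : FlowEqn N e inf flo) (hea : EffAcyclic N e flo) :
    ∀ flo' : ι → M, FlowEqn N e inf flo' → EffAcyclic N e flo' →
      ∀ n ∈ N, flo n = flo' n := by
  intro flo' hflow' hea' n hn
  obtain ⟨φ, rfl⟩ : ∃ φ : ι → ι → M →+ M, e = fun a b => ⇑(φ a b) :=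
    ⟨fun a b =>
      { toFun := e a b
        map_zero' := (hcanc (e a b 0) _ _ (by rw [← hEendo _ (hE a b), add_zero, add_zero])).symm
        map_add' := hEendo _ (hE a b) }, rfl⟩
  have hpos₁ : ∀ a b : M, a + b = 0 → a = 0 := fun a b h => (hpos a b h).1
  rw [hflow.eq_flowApprox_add_flowTail φ (#N + 1) n hn, hflow.flowTail_eq_zero φ hpos₁ hea,
    hflow'.eq_flowApprox_add_flowTail φ (#N + 1) n hn, hflow'.flowTail_eq_zero φ hpos₁ hea']

/-- Effectively acyclic flow graphs have unique flows among effectively acyclic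
solutions of the flow equation. -/
theorem stmt11 {ι M : Type*} [AddCommMonoid M]
    (hpos : ∀ a b : M, a + b = 0 → a = 0 ∧ b = 0)
    (hcanc : ∀ a b c : M, a + b = a + c → b = c)
    (E : Set (M → M))
    (hEendo : ∀ f ∈ E, ∀ a b : M, f (a + b) = f a + f b)
    (hEcomp : ∀ f ∈ E, ∀ g ∈ E, (f ∘ g) ∈ E)
    (hEadd : ∀ f ∈ E, ∀ g ∈ E, (fun m => f m + g m) ∈ E)
    (N : Finset ι) (e : ι → ι → M → M) (hE : ∀ a b, e a b ∈ E)
    (inf flo : ι → M)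
    (hflow : FlowEqn N e inf flo) (hea : EffAcyclic N e flo) :
    ∀ flo' : ι → M, FlowEqn N e inf flo' → EffAcyclic N e flo' →
      ∀ n ∈ N, flo n = flo' n :=
  stmt11_general hpos hcanc E hEendo N e hE inf flo hflow hea
end
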